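/- arXiv:1912.12369 — 2 statements merged into one kernel-verified Lean document; each statement's English description precedes it below -/
import Mathlib

section
/- Let $l \in \mathbb{Z}$ with $l \geq 1$. Then $\sum_{u=0}^{l} \frac{(-1)^u}{1+l-u} \cdot \frac{u!\,(2l-u)!}{l!\,l!} \binom{l}{u}^2 = 0$. -/
/-!
Cancelling factorials, the `u`-th summand is `(-1)^u * C(l, u) * C(2l - u, l - 1) / l`. After the
substitution `u ↦ l - u` the sum becomes the `l`-th forward difference of `x ↦ C(x, l - 1)` at `l`,
which vanishes because that function is a polynomial of degree `l - 1`.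
-/

open Finset fwdDiff

theorem fwdDiff_iter_choose_eq_zero_of_lt {j n : ℕ} (h : j < n) :
    Δ_[1] ^[n] (fun x ↦ x.choose j : ℕ → ℤ) = 0 := by
  obtain ⟨k, rfl⟩ := Nat.exists_eq_add_of_lt h
  have hj : Δ_[1] ^[j] (fun x ↦ x.choose j : ℕ → ℤ) = fun _ ↦ 1 := by
    simpa using fwdDiff_iter_choose 0 j
  rw [show j + k + 1 = k + 1 + j by ring, Function.iterate_add_apply, hj,
    Function.iterate_succ_apply, fwdDiff_const]
  exact Function.iterate_fixed (fwdDiff_const 1 0) k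

theorem alternating_sum_choose_mul_choose_eq_zero {j n : ℕ} (h : j < n) (a : ℕ) :
    ∑ k ∈ range (n + 1), (-1 : ℤ) ^ (n - k) * n.choose k * (a + k).choose j = 0 := by
  simpa [fwdDiff_iter_choose_eq_zero_of_lt h] using
    (fwdDiff_iter_eq_sum_shift 1 (fun x ↦ x.choose j : ℕ → ℤ) n a).symm

theorem summand_eq_choose_mul_choose_div {l u : ℕ} (hl : 1 ≤ l) (hu : u ≤ l) :
    (-1 : ℝ) ^ u / (1 + (l : ℝ) - (u : ℝ)) *
        ((Nat.factorial u * Nat.factorial (2 * l - u) : ℝ) /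
          (Nat.factorial l * Nat.factorial l)) * (Nat.choose l u : ℝ) ^ 2 =
      (-1 : ℝ) ^ u * l.choose u * (2 * l - u).choose (l - 1) / l := by
  have h1 : (1 + (l : ℝ) - u) = ((l + 1 - u : ℕ) : ℝ) := by
    push_cast [Nat.cast_sub (by omega : u ≤ l + 1)]; ring
  rw [h1, Nat.cast_choose ℝ hu, Nat.cast_choose ℝ (by omega : l - 1 ≤ 2 * l - u),
    show 2 * l - u - (l - 1) = (l - u) + 1 by omega]
  obtain ⟨m, rfl⟩ : ∃ m, l = m + 1 := ⟨l - 1, by omega⟩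
  rw [show m + 1 + 1 - u = (m + 1 - u) + 1 by omega]
  simp only [Nat.factorial_succ, add_tsub_cancel_right]
  push_cast
  field_simp

theorem sum_xi_zero (l : ℕ) (hl : 1 ≤ l) :
    ∑ u ∈ Finset.range (l + 1),
      ((-1 : ℝ) ^ u / (1 + (l : ℝ) - (u : ℝ))) *
        ((Nat.factorial u * Nat.factorial (2 * l - u) : ℝ) /
          (Nat.factorial l * Nat.factorial l)) *
        ((Nat.choose l u : ℝ)) ^ 2 = 0 := by
  have key : ∑ u ∈ range (l + 1), (-1 : ℤ) ^ u * l.choose u * (2 * l - u).choose (l - 1) = 0 := by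
    rw [← alternating_sum_choose_mul_choose_eq_zero (by omega : l - 1 < l) l, ← sum_range_reflect]
    refine sum_congr rfl fun u hu ↦ ?_
    have hu : u ≤ l := Nat.lt_succ_iff.mp (mem_range.mp hu)
    rw [show l + 1 - 1 - u = l - u by omega, Nat.choose_symm hu,
      show 2 * l - (l - u) = l + u by omega]
  rw [sum_congr rfl fun u hu ↦
      summand_eq_choose_mul_choose_div hl (Nat.lt_succ_iff.mp (mem_range.mp hu)),
    ← sum_div, show ∑ u ∈ range (l + 1), (-1 : ℝ) ^ u * l.choose u * (2 * l - u).choose (l - 1) = 0 by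
    exact_mod_cast key, zero_div]
end

section
/- Let $x, y, z$ be complex numbers with $|x| < 1$, $|xy| < 1$, $|xz| < 1$, $|xyz| < 1$, $y \neq 1$, $z \neq 1$. Then $\sum_{j=0}^{\infty} \frac{1 - y^{j+1}}{1 - y} \cdot \frac{1 - z^{j+1}}{1 - z} \, x^j = \frac{1 - x^2 y z}{(1-x)(1-xy)(1-xz)(1-xyz)}$. -/
theorem ramanujan_local_factor (x y z : ℂ)
    (hx : ‖x‖ < 1) (hxy : ‖x * y‖ < 1)
    (hxz : ‖x * z‖ < 1) (hxyz : ‖x * y * z‖ < 1)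
    (hy : y ≠ 1) (hz : z ≠ 1) :
    HasSum (fun j : ℕ =>
        ((1 - y ^ (j + 1)) / (1 - y)) * ((1 - z ^ (j + 1)) / (1 - z)) * x ^ j)
      ((1 - x ^ 2 * y * z) / ((1 - x) * (1 - x * y) * (1 - x * z) * (1 - x * y * z))) := by
  have hy' : (1 : ℂ) - y ≠ 0 := sub_ne_zero.mpr (Ne.symm hy)
  have hz' : (1 : ℂ) - z ≠ 0 := sub_ne_zero.mpr (Ne.symm hz)
  have ne1 : ∀ w : ℂ, ‖w‖ < 1 → (1 : ℂ) - w ≠ 0 := by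
    intro w hw
    intro h
    rw [← sub_eq_zero.mp h] at hw
    simp at hw
  have hx' := ne1 x hx
  have hxy' := ne1 _ hxy
  have hxz' := ne1 _ hxz
  have hxyz' := ne1 _ hxyz
  have h1 := hasSum_geometric_of_norm_lt_one (ξ := x) hx
  have h2 := hasSum_geometric_of_norm_lt_one (ξ := x * y) hxy
  have h3 := hasSum_geometric_of_norm_lt_one (ξ := x * z) hxz
  have h4 := hasSum_geometric_of_norm_lt_one (ξ := x * y * z) hxyz
  have H := (((h1.sub (h2.mul_left y)).sub (h3.mul_left z)).add
    (h4.mul_left (y * z))).div_const ((1 - y) * (1 - z))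
  convert H using 1
  · rfl
  · funext j
    field_simp
    ring
  · rw [div_eq_div_iff (mul_ne_zero (mul_ne_zero (mul_ne_zero hx' hxy') hxz') hxyz')
      (mul_ne_zero hy' hz')]
    field_simp
    ring
end
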